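/- The sequence f defined from v = (1,−1,−1,1,−1,1,1,1,1,−1,−1) with d = 11 is Apwenian: for every positive integer n, 2^(n−1) divides the Hankel determinant H_n(f) and H_n(f)/2^(n−1) is an odd integer. -/

import Mathlib

/-!
Put `g k = (f (k + 1) - f k) / 2`. Column operations factor the Hankel matrix of `f` of order
`m + 1` as `N * U`, where `U` is triangular with determinant `2 ^ m` and `N` has first column
`f i` and remaining entries `g (i + j)`. Modulo 2 the first column of `N` is constant, and
subtracting consecutive rows identifies `det N mod 2` with the Hankel determinant over `𝔽₂` of
`s k = g (k + 1) - g k`. So `f` is Apwenian as soon as all Hankel determinants of `s` over `𝔽₂`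
equal `1`.

The digit rule for `v` propagates `f k * f (k + 1) * f (2k + 1) * f (2k + 2) = -1` from the
residues `k mod 11` to all `k`; this says that exactly one of `g k`, `g (2k + 1)` is odd, and hence
`s 0 = 1` and `s (2k + 2) = s (2k + 1) + s k` over `𝔽₂`. For such `s`, induction on `n` with the
monic orthogonal polynomial `p` of degree `n` for the Hankel form of `s` gives
`H_{n+1} = H_n * ⟨p, p⟩`, and over `𝔽₂` the form is diagonal, `⟨p, p⟩ = ∑ p i * s (2 i)`, which
the recurrence evaluates to `1`.
-/

/-- The Hankel determinant of order `n` of the sequence `c`. -/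
def hankel (c : ℕ → ℤ) (n : ℕ) : ℤ :=
  Matrix.det (Matrix.of fun i j : Fin n => c (i.1 + j.1))

open Finset Matrix

def IsApwenian (c : ℕ → ℤ) : Prop :=
  ∀ n : ℕ, 0 < n → (2 : ℤ) ^ (n - 1) ∣ hankel c n ∧ Odd (hankel c n / 2 ^ (n - 1))

section HankelMatrix

variable {R : Type*} [CommRing R]

def hankelMatrix (s : ℕ → R) (n : ℕ) : Matrix (Fin n) (Fin n) R :=
  of fun i j => s (i + j)

def borderedHankelMatrix (a g : ℕ → R) (m : ℕ) : Matrix (Fin (m + 1)) (Fin (m + 1)) R :=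
  of fun i => Fin.cons (a i) fun j : Fin m => g (i + j)

theorem det_hankelMatrix_eq_det_bordered_mul_two_pow {f g : ℕ → R}
    (hfg : ∀ k, f (k + 1) = f k + 2 * g k) (m : ℕ) :
    (hankelMatrix f (m + 1)).det = (borderedHankelMatrix f g m).det * 2 ^ m := by
  have htel : ∀ i j, f (i + j) = f i + ∑ t ∈ range j, 2 * g (i + t) := by
    intro i j
    induction j with
    | zero => simp
    | succ j ih => rw [sum_range_succ, ← add_assoc (f i), ← ih, ← hfg, add_assoc]
  let U : Matrix (Fin (m + 1)) (Fin (m + 1)) R :=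
    of fun k j => Fin.cases 1 (fun k' : Fin m => if (k' : ℕ) < j then 2 else 0) k
  have hU : U.det = 2 ^ m := by
    rw [det_of_isUpperTriangular, Fin.prod_univ_succ]
    · simp [U]
    · intro k j (hjk : j < k)
      induction k using Fin.cases with
      | zero => exact absurd hjk (Fin.not_lt_zero j)
      | succ k => simp [U, Fin.lt_def] at hjk ⊢; omega
  have hfac : hankelMatrix f (m + 1) = borderedHankelMatrix f g m * U := by
    ext i j
    have hj : (range m).filter (· < (j : ℕ)) = range j := by
      ext t; simp only [mem_filter, mem_range]; omega
    rw [mul_apply, Fin.sum_univ_succ]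
    simp only [hankelMatrix, borderedHankelMatrix, U, of_apply, Fin.cons_zero, Fin.cons_succ,
      Fin.cases_zero, Fin.cases_succ, mul_one, mul_ite, mul_zero]
    rw [Fin.sum_univ_eq_sum_range (fun t => if t < (j : ℕ) then g (i + t) * 2 else 0),
      ← sum_filter, hj, htel]
    simp_rw [mul_comm]
  rw [hfac, det_mul, hU]

theorem det_borderedHankelMatrix_one (G : ℕ → R) (m : ℕ) :
    (borderedHankelMatrix (fun _ => 1) G m).det =
      (hankelMatrix (fun k => G (k + 1) - G k) m).det := by
  set N := borderedHankelMatrix (fun _ => 1) G m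
  let L : Matrix (Fin (m + 1)) (Fin (m + 1)) R :=
    of fun i k => if k = i then 1 else if (k : ℕ) + 1 = i then -1 else 0
  have hL : L.det = 1 := by
    rw [det_of_isLowerTriangular]
    · simp [L]
    · intro i k (hik : i < k)
      simp only [L, of_apply, hik.ne', if_false]
      rw [if_neg (by rw [Fin.lt_def] at hik; omega)]
  have hrow0 : ∀ j, (L * N) 0 j = N 0 j := by
    intro j
    rw [mul_apply, Fintype.sum_eq_single 0]
    · simp [L]
    · intro k hk; simp [L, hk]
  have hrow : ∀ (i : Fin m) j, (L * N) i.succ j = N i.succ j - N i.castSucc j := by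
    intro i j
    rw [mul_apply, Fintype.sum_eq_add i.succ i.castSucc (Fin.castSucc_lt_succ (i := i)).ne']
    · simp [L, (Fin.castSucc_lt_succ (i := i)).ne, sub_eq_add_neg]
    · rintro k ⟨hk1, hk2⟩
      have : (k : ℕ) ≠ i := fun h => hk2 (Fin.ext h)
      simp [L, hk1, this]
  rw [← one_mul N.det, ← hL, ← det_mul, det_succ_column_zero, Fin.sum_univ_succ,
    sum_eq_zero fun i _ => by rw [hrow]; simp [N, borderedHankelMatrix], add_zero]
  rw [hrow0, Fin.succAbove_zero, show N 0 0 = 1 by simp [N, borderedHankelMatrix], Fin.val_zero,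
    pow_zero, one_mul, one_mul]
  congr 1
  ext i j
  rw [submatrix_apply, hrow]
  simp [N, borderedHankelMatrix, hankelMatrix, add_right_comm]

theorem exists_hankel_orthogonal {s : ℕ → R} {n : ℕ} (h : IsUnit (hankelMatrix s n).det) :
    ∃ p : ℕ → R, p n = 1 ∧ ∀ m < n, ∑ j ∈ range (n + 1), p j * s (m + j) = 0 := by
  obtain ⟨c, hc⟩ := mulVec_surjective_iff_isUnit.mpr ((isUnit_iff_isUnit_det _).mpr h)
    fun i : Fin n => -s (i + n)
  refine ⟨fun j => if hj : j < n then c ⟨j, hj⟩ else 1, by simp, fun m hm => ?_⟩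
  have hm' := congrFun hc ⟨m, hm⟩
  simp only [mulVec, dotProduct, hankelMatrix, of_apply] at hm'
  rw [sum_range_succ, ← Fin.sum_univ_eq_sum_range]
  simp only [Fin.is_lt, dif_pos, Fin.eta, lt_irrefl, dif_neg, not_false_eq_true, one_mul,
    mul_comm (c _), hm', neg_add_cancel]

theorem det_hankelMatrix_succ_of_orthogonal {s p : ℕ → R} {n : ℕ} (hpn : p n = 1)
    (horth : ∀ m < n, ∑ j ∈ range (n + 1), p j * s (m + j) = 0) :
    (hankelMatrix s (n + 1)).det =
      (hankelMatrix s n).det * ∑ j ∈ range (n + 1), p j * s (n + j) := by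
  let E : Matrix (Fin (n + 1)) (Fin (n + 1)) R :=
    of fun k j => if j = Fin.last n then p k else if k = j then 1 else 0
  have hE : E.det = 1 := by
    rw [det_of_isUpperTriangular]
    · refine prod_eq_one fun k _ => ?_
      by_cases hk : k = Fin.last n <;> simp [E, hk, hpn]
    · intro i j (hij : j < i)
      simp [E, hij.ne', Fin.ne_last_of_lt hij]
  -- multiplying by `E` replaces the last column by `H *ᵥ p`, which vanishes off the last entry
  have hlast : ∀ i : Fin (n + 1),
      (hankelMatrix s (n + 1) * E) i (Fin.last n) = ∑ k ∈ range (n + 1), p k * s (i + k) := by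
    intro i
    simp [E, mul_apply, hankelMatrix, ← Fin.sum_univ_eq_sum_range, mul_comm]
  have hminor : (hankelMatrix s (n + 1) * E).submatrix (Fin.last n).succAbove
      (Fin.last n).succAbove = hankelMatrix s n := by
    ext i j
    simp [E, mul_apply, hankelMatrix, Fin.succAbove_last, (Fin.castSucc_lt_last j).ne]
  rw [← mul_one (hankelMatrix s (n + 1)).det, ← hE, ← det_mul, det_succ_column _ (Fin.last n),
    sum_eq_single (Fin.last n)]
  · rw [hlast, hminor, Fin.val_last, ← two_mul, pow_mul, neg_one_sq, one_pow, one_mul, mul_comm]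
  · intro i _ hi
    rw [hlast, horth i (Fin.val_lt_last hi), mul_zero, zero_mul]
  · simp

theorem sum_succ_mul_ne_zero_of_orthogonal [Nontrivial R] {s p : ℕ → R} {n : ℕ}
    (h : IsUnit (hankelMatrix s n).det) (hpn : p n = 1) (hp0 : p 0 = 0)
    (horth : ∀ m < n, ∑ j ∈ range (n + 1), p j * s (m + j) = 0) :
    ∑ l ∈ range n, p (l + 1) * s l ≠ 0 := by
  -- otherwise `(p 1, …, p n)` would be a nonzero vector in the kernel of `H_n`
  intro hT
  obtain ⟨n, rfl⟩ : ∃ n', n = n' + 1 :=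
    Nat.exists_eq_succ_of_ne_zero (by rintro rfl; simp [hpn] at hp0)
  have hker : hankelMatrix s (n + 1) *ᵥ (fun l : Fin (n + 1) => p (l + 1)) = 0 := by
    funext ⟨i, hi⟩
    simp only [mulVec, dotProduct, hankelMatrix, of_apply, Pi.zero_apply]
    rw [Fin.sum_univ_eq_sum_range (fun l => s (i + l) * p (l + 1))]
    cases i with
    | zero => simpa [mul_comm] using hT
    | succ i =>
      have hi' := horth i (by omega)
      rw [sum_range_succ', hp0, zero_mul, add_zero] at hi'
      simpa [mul_comm, add_assoc, add_comm 1] using hi'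
  have hq := congrFun (mulVec_injective_of_isUnit ((isUnit_iff_isUnit_det _).mpr h)
    (hker.trans (mulVec_zero _).symm)) (Fin.last n)
  simp [hpn] at hq

end HankelMatrix

theorem sum_sum_mul_mul_eq_sum_diag (q t : ℕ → ZMod 2) (N : ℕ) :
    ∑ i ∈ range N, ∑ j ∈ range N, q i * q j * t (i + j) = ∑ i ∈ range N, q i * t (2 * i) := by
  induction N with
  | zero => simp
  | succ N ih =>
    have hq : q N * q N = q N := by generalize q N = x; revert x; decide
    have hcross :
        ∑ i ∈ range N, q i * q N * t (i + N) + ∑ j ∈ range N, q N * q j * t (N + j) = 0 := by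
      rw [← sum_add_distrib]
      exact sum_eq_zero fun i _ => by
        rw [mul_comm (q N), add_comm N]; exact CharTwo.add_self_eq_zero _
    simp only [sum_range_succ, sum_add_distrib, ih, ← two_mul N]
    linear_combination hcross + t (2 * N) * hq

theorem sum_orthogonal_mul_eq_of_rec {s p : ℕ → ZMod 2} {n : ℕ} (hs0 : s 0 = 1)
    (hrec : ∀ k, s (2 * k + 2) = s (2 * k + 1) + s k) (hpn : p n = 1)
    (horth : ∀ m < n, ∑ j ∈ range (n + 1), p j * s (m + j) = 0) :
    ∑ j ∈ range (n + 1), p j * s (n + j) =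
      p 0 + (p 0 + 1) * ∑ l ∈ range n, p (l + 1) * s l := by
  have hdiag : ∑ j ∈ range (n + 1), p j * s (n + j) = ∑ i ∈ range (n + 1), p i * s (2 * i) :=
    calc ∑ j ∈ range (n + 1), p j * s (n + j)
        = ∑ i ∈ range (n + 1), p i * ∑ j ∈ range (n + 1), p j * s (i + j) := by
          have hlow : ∀ i ∈ range n, p i * ∑ j ∈ range (n + 1), p j * s (i + j) = 0 :=
            fun i hi => by rw [horth i (mem_range.mp hi), mul_zero]
          rw [sum_range_succ (fun i => p i * ∑ j ∈ range (n + 1), p j * s (i + j)),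
            sum_eq_zero hlow, zero_add, hpn, one_mul]
      _ = ∑ i ∈ range (n + 1), ∑ j ∈ range (n + 1), p i * p j * s (i + j) := by
          simp_rw [mul_sum, mul_assoc]
      _ = ∑ i ∈ range (n + 1), p i * s (2 * i) := sum_sum_mul_mul_eq_sum_diag p s (n + 1)
  have hodd :
      ∑ l ∈ range n, p (l + 1) * s (2 * l + 1) + p 0 * ∑ l ∈ range n, p (l + 1) * s l = 0 := by
    have h : ∑ l ∈ range n, p (l + 1) * ∑ j ∈ range (n + 1), p j * s (l + j) = 0 :=
      sum_eq_zero fun l hl => by rw [horth l (mem_range.mp hl), mul_zero]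
    simp_rw [sum_range_succ', add_zero, mul_add, sum_add_distrib, mul_sum] at h
    rw [← h, ← sum_sum_mul_mul_eq_sum_diag (fun l => p (l + 1)) (fun k => s (k + 1)), mul_sum]
    congr 1
    · simp_rw [mul_assoc, add_assoc]
    · exact sum_congr rfl fun _ _ => mul_left_comm _ _ _
  rw [hdiag, sum_range_succ', mul_zero, hs0]
  simp_rw [mul_add_one, hrec, mul_add, sum_add_distrib]
  linear_combination
    hodd - (∑ l ∈ range n, p (l + 1) * s l) * p 0 * CharTwo.two_eq_zero (R := ZMod 2)

theorem det_hankelMatrix_eq_one_of_rec {s : ℕ → ZMod 2} (hs0 : s 0 = 1)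
    (hrec : ∀ k, s (2 * k + 2) = s (2 * k + 1) + s k) : ∀ n, (hankelMatrix s n).det = 1
  | 0 => det_fin_zero
  | n + 1 => by
    have ih := det_hankelMatrix_eq_one_of_rec hs0 hrec n
    have hunit : IsUnit (hankelMatrix s n).det := by rw [ih]; exact isUnit_one
    obtain ⟨p, hpn, horth⟩ := exists_hankel_orthogonal hunit
    rw [det_hankelMatrix_succ_of_orthogonal hpn horth, ih, one_mul,
      sum_orthogonal_mul_eq_of_rec hs0 hrec hpn horth]
    rcases (by decide : ∀ x : ZMod 2, x = 0 ∨ x = 1) (p 0) with hp0 | hp0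
    · rw [hp0, zero_add, zero_add, one_mul]
      exact (by decide : ∀ x : ZMod 2, x ≠ 0 → x = 1) _
        (sum_succ_mul_ne_zero_of_orthogonal hunit hpn hp0 horth)
    · rw [hp0, CharTwo.add_self_eq_zero, zero_mul, add_zero]

theorem det_hankelMatrix_sub_eq_one {G : ℕ → ZMod 2} (hG : ∀ k, G k + G (2 * k + 1) = 1)
    (m : ℕ) : (hankelMatrix (fun k => G (k + 1) - G k) m).det = 1 := by
  have two : (2 : ZMod 2) = 0 := rfl
  refine det_hankelMatrix_eq_one_of_rec ?_ (fun k => ?_) m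
  · have h0 : G 0 + G 1 = 1 := hG 0
    linear_combination h0 - G 0 * two
  · have h1 : G (k + 1) + G (2 * k + 2 + 1) = 1 := hG (k + 1)
    linear_combination h1 - hG k + (G k + G (2 * k + 1) - G (k + 1) - G (2 * k + 2)) * two

theorem odd_half_sub_add_half_sub {a b c d : ℤ} (ha : a = 1 ∨ a = -1) (hb : b = 1 ∨ b = -1)
    (hc : c = 1 ∨ c = -1) (hd : d = 1 ∨ d = -1) (h : a * b * c * d = -1) :
    Odd ((b - a) / 2 + (d - c) / 2) := by
  rcases ha with rfl | rfl <;> rcases hb with rfl | rfl <;> rcases hc with rfl | rfl <;>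
    rcases hd with rfl | rfl <;> revert h <;> decide

theorem isApwenian_of_mul_eq_neg_one {f : ℕ → ℤ} (hpm : ∀ k, f k = 1 ∨ f k = -1)
    (hε : ∀ k, f k * f (k + 1) * f (2 * k + 1) * f (2 * k + 2) = -1) : IsApwenian f := by
  intro n hn
  obtain ⟨m, rfl⟩ := Nat.exists_eq_succ_of_ne_zero hn.ne'
  rw [Nat.succ_sub_one]
  set g : ℕ → ℤ := fun k => (f (k + 1) - f k) / 2
  have hodd : ∀ k, Odd (f k) := fun k => by rcases hpm k with h | h <;> simp [h]
  have hfg : ∀ k, f (k + 1) = f k + 2 * g k := fun k => by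
    rw [Int.mul_ediv_cancel' ((hodd (k + 1)).sub_odd (hodd k)).two_dvd]; ring
  have hfac : hankel f (m + 1) = (borderedHankelMatrix f g m).det * 2 ^ m :=
    det_hankelMatrix_eq_det_bordered_mul_two_pow hfg m
  have hN : Odd (borderedHankelMatrix f g m).det := by
    have hG : ∀ k, (g k : ZMod 2) + g (2 * k + 1) = 1 := fun k => by
      rw [← Int.cast_add]
      exact (odd_half_sub_add_half_sub (hpm _) (hpm _) (hpm _) (hpm _) (hε k)).intCast_zmod_two
    have hmod : (Int.castRingHom (ZMod 2)).mapMatrix (borderedHankelMatrix f g m) =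
        borderedHankelMatrix (fun _ => 1) (fun k => (g k : ZMod 2)) m := by
      ext i j
      induction j using Fin.cases <;> simp [borderedHankelMatrix, (hodd _).intCast_zmod_two]
    rw [← ZMod.intCast_eq_one_iff_odd, ← eq_intCast (Int.castRingHom _), RingHom.map_det, hmod]
    exact (det_borderedHankelMatrix_one _ m).trans (det_hankelMatrix_sub_eq_one hG m)
  rw [hfac, Int.mul_ediv_cancel _ (by positivity)]
  exact ⟨dvd_mul_left _ _, hN⟩

section DigitRecurrence

open Fin.NatCast Fin.CommRing

variable {d : ℕ} [NeZero d] {v : Fin d → ℤ} {f : ℕ → ℤ}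

theorem apply_eq_mul_apply_div (hf : ∀ n : ℕ, ∀ i : Fin d, f (d * n + i) = v i * f n) (k : ℕ) :
    f k = v (k : Fin d) * f (k / d) := by
  have h := hf (k / d) (k : Fin d)
  rwa [Fin.val_natCast, Nat.div_add_mod] at h

theorem eq_one_or_eq_neg_one_of_digits (hd : 1 < d) (hv : ∀ i, v i = 1 ∨ v i = -1) (h0 : f 0 = 1)
    (hf : ∀ n : ℕ, ∀ i : Fin d, f (d * n + i) = v i * f n) (k : ℕ) : f k = 1 ∨ f k = -1 := by
  induction k using Nat.strong_induction_on with
  | _ k ih =>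
    rcases Nat.eq_zero_or_pos k with rfl | hk
    · exact .inl h0
    · rw [apply_eq_mul_apply_div hf k]
      rcases hv (k : Fin d) with h | h <;>
        rcases ih (k / d) (Nat.div_lt_self hk hd) with h' | h' <;> simp [h, h']

theorem mul_mul_mul_eq_neg_one_of_digits (hd : Odd d) (hd1 : 1 < d)
    (hv : ∀ i, v i = 1 ∨ v i = -1)
    (hvε : ∀ r : Fin d, (r : ℕ) + 1 < d → v r * v (r + 1) * v (2 * r + 1) * v (2 * r + 2) = -1)
    (hpm : ∀ k, f k = 1 ∨ f k = -1) (hf : ∀ n : ℕ, ∀ i : Fin d, f (d * n + i) = v i * f n)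
    (k : ℕ) : f k * f (k + 1) * f (2 * k + 1) * f (2 * k + 2) = -1 := by
  have hsq : ∀ x : ℤ, x = 1 ∨ x = -1 → x * x = 1 := by rintro x (rfl | rfl) <;> norm_num
  induction k using Nat.strong_induction_on with
  | _ k ih =>
  by_cases hdvd : d ∣ k + 1
  · -- `k ≡ -1 (mod d)`: all four arguments carry, and the identity descends to `k / d`
    obtain ⟨c, rfl⟩ : ∃ c, d = c + 1 := Nat.exists_eq_succ_of_ne_zero (NeZero.ne d)
    obtain ⟨j, hj⟩ := hdvd
    obtain ⟨i, rfl⟩ : ∃ i, j = i + 1 := Nat.exists_eq_succ_of_ne_zero (by rintro rfl; simp at hj)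
    have hk : k = (c + 1) * i + c := by linarith
    have e1 : f k = v (Fin.last c) * f i := by
      rw [← hf, Fin.val_last, hk]
    have e2 : f (k + 1) = v 0 * f (i + 1) := by
      rw [← hf, Fin.val_zero, add_zero, hj]
    have e3 : f (2 * k + 1) = v (Fin.last c) * f (2 * i + 1) := by
      rw [← hf, Fin.val_last, hk]; ring_nf
    have e4 : f (2 * k + 2) = v 0 * f (2 * i + 2) := by
      rw [← hf, Fin.val_zero, add_zero, hk]; ring_nf
    rw [e1, e2, e3, e4]
    calc _ = (v (Fin.last c) * v (Fin.last c)) * (v 0 * v 0) *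
          (f i * f (i + 1) * f (2 * i + 1) * f (2 * i + 2)) := by ring
      _ = -1 := by rw [hsq _ (hv _), hsq _ (hv _), ih i (by nlinarith)]; ring
  · have hr : ((k : Fin d) : ℕ) + 1 < d := by
      rw [Fin.val_natCast]
      by_contra h
      have := Nat.mod_lt k (NeZero.pos d)
      exact hdvd ⟨k / d + 1, by have := Nat.div_add_mod k d; rw [mul_add_one]; omega⟩
    have hdvd2 : ¬ d ∣ 2 * k + 1 + 1 := fun h =>
      hdvd (hd.coprime_two_right.dvd_of_dvd_mul_left (by rwa [mul_add_one]))
    rw [apply_eq_mul_apply_div hf k, apply_eq_mul_apply_div hf (k + 1),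
      apply_eq_mul_apply_div hf (2 * k + 1), apply_eq_mul_apply_div hf (2 * k + 1 + 1),
      Nat.succ_div_of_not_dvd hdvd, Nat.succ_div_of_not_dvd hdvd2]
    push_cast
    calc _ = (v k * v (k + 1) * v (2 * k + 1) * v (2 * k + 1 + 1)) * (f (k / d) * f (k / d)) *
          (f ((2 * k + 1) / d) * f ((2 * k + 1) / d)) := by ring
      _ = -1 := by rw [add_assoc, one_add_one_eq_two, hvε _ hr, hsq _ (hpm _), hsq _ (hpm _)]; ring

end DigitRecurrence

/-- The sequence `f` associated with `v = ![1, -1, -1, 1, -1, 1, 1, 1, 1, -1, -1]` (d = 11) is Apwenian. -/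
theorem F11_apwenian (f : ℕ → ℤ)
    (h0 : f 0 = 1)
    (hf : ∀ n : ℕ, ∀ i : Fin 11, f (11 * n + (i : ℕ)) = ![1, -1, -1, 1, -1, 1, 1, 1, 1, -1, -1] i * f n) :
    ∀ n : ℕ, 0 < n →
      (2 : ℤ) ^ (n - 1) ∣ hankel f n ∧ Odd (hankel f n / 2 ^ (n - 1)) := by
  have hv : ∀ i : Fin 11, ![1, -1, -1, 1, -1, 1, 1, 1, 1, -1, -1] i = 1 ∨
      ![1, -1, -1, 1, -1, 1, 1, 1, 1, -1, -1] i = (-1 : ℤ) := by decide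
  have hpm := eq_one_or_eq_neg_one_of_digits (by norm_num) hv h0 hf
  exact isApwenian_of_mul_eq_neg_one hpm
    (mul_mul_mul_eq_neg_one_of_digits (by decide) (by norm_num) hv (by decide) hpm hf)
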